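/- arXiv:0812.1634 — 2 statements merged into one kernel-verified Lean document; each statement's English description precedes it below -/
import Mathlib

section
/- Let s ≥ 2 be an integer and let λ = (k_1 < k_2 < ⋯ < k_u) be an s-minimal biliaison type. If k is an integer with k_u < k < s (or 0 < k < s when λ = ∅), then q_s(λ ∪ (k)) ≥ q_s(λ) + k(s−k)². In particular, q_s(λ) ≥ (s−1)² for every nonempty s-minimal biliaison type λ. -/
/-- An `s`-minimal biliaison type: a strictly increasing finite sequence of
positive integers, all strictly less than `s` (the empty sequence is allowed). -/
def SMinimal (s : ℕ) (l : List ℕ) : Prop :=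
  l.Chain' (· < ·) ∧ ∀ k ∈ l, 0 < k ∧ k < s

/-- The quadratic form `q_s(λ) = Σ_i k_i(s−1)(s−k_i) − 2 Σ_{i<j} k_i(s−k_j)`. -/
def qform (s : ℕ) (l : List ℕ) : ℤ :=
  (∑ i : Fin l.length, (l.get i : ℤ) * ((s : ℤ) - 1) * ((s : ℤ) - l.get i))
  - 2 * ∑ i : Fin l.length, ∑ j : Fin l.length,
      if (i : ℕ) < (j : ℕ) then (l.get i : ℤ) * ((s : ℤ) - l.get j) else 0

/-- The `s`-dual `λ′ = (s−k_u, …, s−k_1)` of a biliaison type. -/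
def sdual (s : ℕ) (l : List ℕ) : List ℕ := (l.map (fun k => s - k)).reverse

lemma qform_def' (s : ℕ) (l : List ℕ) :
    qform s l = (∑ i ∈ Finset.range l.length,
        (l.getD i 0 : ℤ) * ((s:ℤ)-1) * ((s:ℤ) - l.getD i 0))
      - 2 * ∑ i ∈ Finset.range l.length, ∑ j ∈ Finset.range l.length,
          if i < j then (l.getD i 0 : ℤ) * ((s:ℤ) - l.getD j 0) else 0 := by
  unfold qform
  simp only [Finset.sum_range]
  have h : ∀ i : Fin l.length, l.getD (↑i) 0 = l.get i := fun i => by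
    rw [List.getD_eq_getElem l 0 i.isLt]; rfl
  simp only [h]

lemma sum_getD (l : List ℕ) :
    (∑ i ∈ Finset.range l.length, (l.getD i 0 : ℤ)) = (l.sum : ℤ) := by
  rw [Finset.sum_range]
  have h : ∀ i : Fin l.length, l.getD (↑i) 0 = l.get i := fun i => by
    rw [List.getD_eq_getElem l 0 i.isLt]; rfl
  simp only [h]
  induction l with
  | nil => simp
  | cons a t ih =>
    rw [show (∑ i : Fin (a :: t).length, ((a :: t).get i : ℤ))
        = ∑ i : Fin (t.length + 1), ((a :: t).get i : ℤ) from rfl, Fin.sum_univ_succ]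
    simp only [List.sum_cons]
    push_cast
    simp [ih (fun i => by rw [List.getD_eq_getElem t 0 i.isLt]; rfl)]

lemma qform_append (s k : ℕ) (l : List ℕ) :
    qform s (l ++ [k]) = qform s l + (k:ℤ)*((s:ℤ)-1)*((s:ℤ)-k)
      - 2*((s:ℤ)-k) * (l.sum : ℤ) := by
  rw [qform_def', qform_def', List.length_append]
  simp only [List.length_singleton]
  have hgl : ∀ i ∈ Finset.range l.length, (l ++ [k]).getD i 0 = l.getD i 0 := by
    intro i hi
    rw [Finset.mem_range] at hi
    rw [List.getD_eq_getElem _ 0 (by simp; omega), List.getElem_append_left hi,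
      List.getD_eq_getElem l 0 hi]
  have hgk : (l ++ [k]).getD l.length 0 = k := by
    rw [List.getD_eq_getElem _ 0 (by simp)]
    simp
  rw [Finset.sum_range_succ, Finset.sum_range_succ, hgk]
  rw [Finset.sum_congr rfl (fun i hi => by rw [hgl i hi])]
  have hdouble : ∀ i ∈ Finset.range l.length,
      (∑ j ∈ Finset.range (l.length + 1),
        if i < j then ((l ++ [k]).getD i 0 : ℤ) * ((s:ℤ) - (l ++ [k]).getD j 0) else 0)
      = (∑ j ∈ Finset.range l.length,
          if i < j then (l.getD i 0 : ℤ) * ((s:ℤ) - l.getD j 0) else 0)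
        + (l.getD i 0 : ℤ) * ((s:ℤ) - k) := by
    intro i hi
    rw [Finset.sum_range_succ, hgk, hgl i hi,
      if_pos (Finset.mem_range.mp hi)]
    congr 1
    refine Finset.sum_congr rfl fun j hj => ?_
    rw [hgl j hj]
  rw [Finset.sum_congr rfl hdouble]
  have hlast : (∑ j ∈ Finset.range (l.length + 1),
      if l.length < j then (k : ℤ) * ((s:ℤ) - (l ++ [k]).getD j 0) else 0) = 0 := by
    refine Finset.sum_eq_zero fun j hj => ?_
    rw [Finset.mem_range] at hj
    rw [if_neg (by omega)]
  rw [hlast, Finset.sum_add_distrib, ← Finset.sum_mul, sum_getD]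
  ring

lemma two_sum_le : ∀ (l : List ℕ), l.Pairwise (· < ·) →
    ∀ k, (∀ a ∈ l, a < k) → 2 * l.sum + k ≤ k * k := by
  intro l
  induction l using List.reverseRecOn with
  | nil =>
    intro _ k _
    rcases Nat.eq_zero_or_pos k with rfl | h
    · simp
    · simpa using Nat.le_mul_of_pos_left k h
  | append_singleton t m ih =>
    intro hp k hk
    obtain ⟨pt, -, hlt⟩ := List.pairwise_append.mp hp
    have htm : ∀ a ∈ t, a < m := fun a ha => hlt a ha m (by simp)
    have h1 := ih pt m htm
    have hmk : m < k := hk m (by simp)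
    obtain ⟨n, rfl⟩ : ∃ n, k = n + 1 := ⟨k - 1, by omega⟩
    have h2 : m * (m + 1) ≤ n * (n + 1) :=
      Nat.mul_le_mul (by omega) (by omega)
    simp only [List.sum_append, List.sum_cons, List.sum_nil]
    nlinarith [h1, h2]

lemma step (s k : ℕ) (l : List ℕ) (hl : SMinimal s l) (hk : 0 < k) (hks : k < s)
    (hall : ∀ a ∈ l, a < k) :
    qform s l + (k : ℤ) * ((s : ℤ) - k) ^ 2 ≤ qform s (l ++ [k]) := by
  rw [qform_append]
  have hp : l.Pairwise (· < ·) := List.isChain_iff_pairwise.mp hl.1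
  have h2 : 2 * l.sum + k ≤ k * k := two_sum_le l hp k hall
  have h2' : 2 * (l.sum : ℤ) + k ≤ k * k := by exact_mod_cast h2
  have h1 : (0:ℤ) ≤ (s:ℤ) - k := by
    have : (k:ℤ) < s := by exact_mod_cast hks
    linarith
  nlinarith [mul_nonneg h1 (by linarith : (0:ℤ) ≤ (k:ℤ)*k - k - 2*(l.sum:ℤ))]

lemma part2 (s : ℕ) (hs : 2 ≤ s) : ∀ l : List ℕ, SMinimal s l → l ≠ [] →
    ((s : ℤ) - 1) ^ 2 ≤ qform s l := by
  intro l
  induction l using List.reverseRecOn with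
  | nil => intro _ h; exact absurd rfl h
  | append_singleton t m ih =>
    intro hl _
    have hp : (t ++ [m]).Pairwise (· < ·) := List.isChain_iff_pairwise.mp hl.1
    obtain ⟨pt, -, hlt⟩ := List.pairwise_append.mp hp
    have htm : ∀ a ∈ t, a < m := fun a ha => hlt a ha m (by simp)
    have ht : SMinimal s t :=
      ⟨List.isChain_iff_pairwise.mpr pt, fun a ha => hl.2 a (by simp [ha])⟩
    have hm := hl.2 m (by simp)
    have hms : (m:ℤ) < s := by exact_mod_cast hm.2
    have hm1 : (1:ℤ) ≤ m := by exact_mod_cast hm.1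
    have hstep := step s m t ht hm.1 hm.2 htm
    rcases eq_or_ne t [] with rfl | hne
    · have h0 : qform s ([] : List ℕ) = 0 := by simp [qform]
      rw [qform_append, h0]
      simp only [List.sum_nil, Nat.cast_zero]
      have hs2 : (2:ℤ) ≤ s := by exact_mod_cast hs
      nlinarith [mul_nonneg (by linarith : (0:ℤ) ≤ (m:ℤ) - 1)
        (by linarith : (0:ℤ) ≤ (s:ℤ) - m - 1)]
    · have := ih ht hne
      have hsq : (0:ℤ) ≤ (m:ℤ) * ((s:ℤ) - m)^2 := by positivity
      linarith

/-- Corollary 8.5(a): appending a new largest entry `k` increases `q_s` by at least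
`k(s−k)²`; in particular `q_s(λ) ≥ (s−1)²` for every nonempty `s`-minimal `λ`. -/
theorem stmt4 (s : ℕ) (hs : 2 ≤ s) (l : List ℕ) (hl : SMinimal s l) :
    (∀ k : ℕ, 0 < k → k < s → (∀ a ∈ l, a < k) →
      qform s l + (k : ℤ) * ((s : ℤ) - k) ^ 2 ≤ qform s (l ++ [k])) ∧
    (l ≠ [] → ((s : ℤ) - 1) ^ 2 ≤ qform s l) := by
  exact ⟨fun k hk hks hall => step s k l hl hk hks hall, part2 s hs l hl⟩
end

section
/- Let s ≥ 2 be an integer, let λ = (k_1 < k_2 < ⋯ < k_u) be an s-minimal biliaison type, and let k be an integer with k_i < k < k_{i+1} for some 1 ≤ i ≤ u−1. Then q_s(k_1, …, k_i, k, k_{i+1}, …, k_u) ≥ q_s(λ) + k(s−k). -/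
lemma fin_sum_map (l : List ℕ) (f : ℕ → ℤ) :
    ∑ i : Fin l.length, f (l.get i) = (l.map f).sum := by
  induction l with
  | nil => simp
  | cons a t ih => simp [Fin.sum_univ_succ, ih]

/-- Auxiliary: `Σ_{j ∈ l} (s − j)` over `ℤ`. -/
def gsum (s : ℕ) (l : List ℕ) : ℤ := (l.map (fun j : ℕ => (s : ℤ) - (j : ℤ))).sum

lemma qform_cons (s a : ℕ) (t : List ℕ) :
    qform s (a :: t) = (a:ℤ)*((s:ℤ)-1)*((s:ℤ)-a) - 2*(a:ℤ)*gsum s t + qform s t := by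
  have hg : (∑ j : Fin t.length, ((a:ℤ) * ((s:ℤ) - (t.get j : ℤ)))) = (a:ℤ) * gsum s t := by
    rw [← Finset.mul_sum, fin_sum_map t (fun j : ℕ => (s:ℤ) - (j:ℤ)), gsum]
  simp only [qform, List.length_cons, Fin.sum_univ_succ, Fin.val_zero, Fin.val_succ,
    List.get_eq_getElem, List.getElem_cons_succ, List.getElem_cons_zero,
    lt_irrefl, Nat.succ_pos, Nat.not_lt_zero,
    add_lt_add_iff_right, if_true, if_false, Finset.sum_const_zero, zero_add]
  simp only [List.get_eq_getElem] at hg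
  rw [hg]
  set S2 := ∑ x : Fin t.length, ∑ y : Fin t.length,
      if (x:ℕ) < (y:ℕ) then (t[(x:ℕ)] : ℤ) * ((s:ℤ) - (t[(y:ℕ)] : ℤ)) else 0 with hS2
  ring

lemma gsum_append (s : ℕ) (L M : List ℕ) : gsum s (L ++ M) = gsum s L + gsum s M := by
  simp [gsum]

lemma gsum_cons (s a : ℕ) (t : List ℕ) : gsum s (a :: t) = ((s:ℤ) - a) + gsum s t := by
  simp [gsum]

lemma qform_insert (s k : ℕ) (L M : List ℕ) :
    qform s (L ++ k :: M) = qform s (L ++ M) + (k:ℤ)*((s:ℤ)-1)*((s:ℤ)-k)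
      - 2*(k:ℤ)*gsum s M - 2*((s:ℤ)-k) * ((L.map (fun a : ℕ => (a:ℤ))).sum) := by
  induction L with
  | nil => simp [qform_cons]; ring
  | cons a L ih =>
    simp only [List.cons_append, qform_cons, ih, gsum_append, gsum_cons, List.map_cons,
      List.sum_cons]
    ring

lemma sum_bound (L : List ℕ) (m : ℕ) (hnd : L.Nodup) (hm : ∀ x ∈ L, 0 < x ∧ x < m) :
    2 * L.sum ≤ m * (m - 1) := by
  have h1 : L.sum = ∑ x ∈ L.toFinset, x := by
    rw [List.sum_toFinset _ hnd]; simp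
  have h2 : L.toFinset ⊆ Finset.range m := by
    intro x hx
    simp only [List.mem_toFinset] at hx
    exact Finset.mem_range.mpr (hm x hx).2
  have h3 : ∑ x ∈ L.toFinset, x ≤ ∑ x ∈ Finset.range m, x :=
    Finset.sum_le_sum_of_subset h2
  have h4 := Finset.sum_range_id_mul_two m
  omega

lemma gsum_eq_cast (s : ℕ) (l : List ℕ) (hl : ∀ b ∈ l, b ≤ s) :
    gsum s l = ((l.map (fun b => s - b)).sum : ℤ) := by
  induction l with
  | nil => simp [gsum]
  | cons a t ih =>
    have ha : a ≤ s := hl a (by simp)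
    rw [gsum_cons, ih (fun b hb => hl b (by simp [hb]))]
    simp only [List.map_cons, List.sum_cons]
    push_cast [Nat.cast_sub ha]
    ring

/-- Corollary 8.5(b): inserting a new entry `k` strictly between two consecutive
entries increases `q_s` by at least `k(s−k)`. -/
theorem stmt5 (s k : ℕ) (hs : 2 ≤ s) (l₁ l₂ : List ℕ)
    (h : SMinimal s (l₁ ++ l₂)) (h1 : l₁ ≠ []) (h2 : l₂ ≠ [])
    (hk1 : ∀ a ∈ l₁, a < k) (hk2 : ∀ b ∈ l₂, k < b) :
    qform s (l₁ ++ l₂) + (k : ℤ) * ((s : ℤ) - k) ≤ qform s (l₁ ++ [k] ++ l₂) := by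
  obtain ⟨hch, hmem⟩ := h
  have hpw : (l₁ ++ l₂).Pairwise (· < ·) := List.isChain_iff_pairwise.mp hch
  have hnd : (l₁ ++ l₂).Nodup := hpw.imp (fun hlt => Nat.ne_of_lt hlt)
  have hnd1 : l₁.Nodup := (List.nodup_append.mp hnd).1
  have hnd2 : l₂.Nodup := (List.nodup_append.mp hnd).2.1
  obtain ⟨a₀, ha₀⟩ := List.exists_mem_of_ne_nil l₁ h1
  obtain ⟨b₀, hb₀⟩ := List.exists_mem_of_ne_nil l₂ h2
  have hk2' : 2 ≤ k := by
    have := (hmem a₀ (by simp [ha₀])).1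
    have := hk1 a₀ ha₀
    omega
  have hks : k + 2 ≤ s := by
    have := (hmem b₀ (by simp [hb₀])).2
    have := hk2 b₀ hb₀
    omega
  have hA : 2 * l₁.sum ≤ k * (k - 1) := by
    refine sum_bound l₁ k hnd1 fun x hx => ⟨(hmem x (by simp [hx])).1, hk1 x hx⟩
  set L2 := l₂.map (fun b => s - b) with hL2
  have hnd2' : L2.Nodup := by
    refine hnd2.map_on fun x hx y hy hxy => ?_
    have hx' := (hmem x (by simp [hx])).2
    have hy' := (hmem y (by simp [hy])).2
    omega
  have hB : 2 * L2.sum ≤ (s - k) * (s - k - 1) := by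
    refine sum_bound L2 (s - k) hnd2' fun x hx => ?_
    simp only [hL2, List.mem_map] at hx
    obtain ⟨b, hb, rfl⟩ := hx
    have := (hmem b (by simp [hb])).2
    have := hk2 b hb
    omega
  have hgoal : l₁ ++ [k] ++ l₂ = l₁ ++ (k :: l₂) := by simp
  rw [hgoal, qform_insert]
  have hg2 : gsum s l₂ = (L2.sum : ℤ) :=
    gsum_eq_cast s l₂ fun b hb => Nat.le_of_lt (hmem b (by simp [hb])).2
  have hcast : (l₁.map (fun a : ℕ => (a:ℤ))).sum = (l₁.sum : ℤ) := by
    rw [Nat.cast_list_sum]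
  rw [hg2, hcast]
  have hAz : 2 * (l₁.sum : ℤ) ≤ (k:ℤ) * ((k:ℤ) - 1) := by exact_mod_cast
    calc (2 * l₁.sum : ℤ) ≤ ((k * (k-1) : ℕ) : ℤ) := by exact_mod_cast hA
    _ = (k:ℤ) * ((k:ℤ) - 1) := by push_cast [Nat.cast_sub (by omega : 1 ≤ k)]; ring
  have hBz : 2 * (L2.sum : ℤ) ≤ ((s:ℤ) - k) * (((s:ℤ) - k) - 1) := by
    calc (2 * L2.sum : ℤ) ≤ (((s-k) * (s - k - 1) : ℕ) : ℤ) := by exact_mod_cast hB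
    _ = ((s:ℤ) - k) * (((s:ℤ) - k) - 1) := by
        push_cast [Nat.cast_sub (by omega : k ≤ s), Nat.cast_sub (by omega : 1 ≤ s - k)]
        ring
  have hkpos : (0:ℤ) ≤ (k:ℤ) := by positivity
  have hskpos : (0:ℤ) ≤ (s:ℤ) - k := by
    have : (k:ℤ) + 2 ≤ s := by exact_mod_cast hks
    linarith
  nlinarith [mul_le_mul_of_nonneg_left hBz hkpos, mul_le_mul_of_nonneg_left hAz hskpos]
end
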